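/- arXiv:1211.2723 — 3 statements merged into one kernel-verified Lean document; each statement's English description precedes it below -/
import Mathlib

section
/- For every n ≥ 3, the root code R_n = {0, 11, 101, 1001, …, 1 0^{n−2} 1}, whose length sequence is (1, 2, …, n), is an optimal symmetric fix-free code with n codewords; that is, R_n ∈ O_n. -/
/-- A binary string is a `List Bool` (`false` = 0, `true` = 1).
A palindrome is a string equal to its own reversal. -/
def Palin (w : List Bool) : Prop := w.reverse = w

/-- A symmetric fix-free code: a finite set of binary palindromes in which
no element is a proper prefix of another. -/
def IsSFF (C : Finset (List Bool)) : Prop :=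
  (∀ w ∈ C, Palin w) ∧ ∀ u ∈ C, ∀ w ∈ C, u <+: w → u = w

/-- The sorted nondecreasing length sequence of a code. -/
def lenSeq (C : Finset (List Bool)) : List ℕ :=
  (C.val.map List.length).sort (· ≤ ·)

/-- The `i`-th entry (0-indexed) of the sorted length sequence. -/
def nthLen (C : Finset (List Bool)) (i : ℕ) : ℕ := (lenSeq C).getD i 0

/-- `p` is a probability vector with `p 0 ≥ p 1 ≥ ⋯ ≥ p (n-1) > 0`. -/
def IsProbVec (p : ℕ → ℝ) (n : ℕ) : Prop :=
  (∀ i j, i < n → j < n → i ≤ j → p j ≤ p i) ∧ (∀ i < n, 0 < p i) ∧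
    ∑ i ∈ Finset.range n, p i = 1

/-- Expected codeword length of `C` (via its sorted length sequence) under `p`. -/
noncomputable def expLen (p : ℕ → ℝ) (n : ℕ) (C : Finset (List Bool)) : ℝ :=
  ∑ i ∈ Finset.range n, p i * (nthLen C i : ℝ)

/-- `C` is an optimal symmetric fix-free code with `n` codewords: for some
nonincreasing probability vector, its expected length is minimal among all
symmetric fix-free codes with `n` codewords. -/
def IsOptimal (n : ℕ) (C : Finset (List Bool)) : Prop :=
  IsSFF C ∧ C.card = n ∧ ∃ p : ℕ → ℝ, IsProbVec p n ∧
    ∀ C' : Finset (List Bool), IsSFF C' → C'.card = n →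
      expLen p n C ≤ expLen p n C'

/-- Membership in `O_n`: optimal with `n` codewords and not containing the string `1`. -/
def InOpt (n : ℕ) (C : Finset (List Bool)) : Prop :=
  IsOptimal n C ∧ [true] ∉ C

/-- The root codeword `s i`: `s 1 = 0`, and `s i = 1 0^(i-2) 1` for `i ≥ 2`. -/
def rootWord (i : ℕ) : List Bool :=
  if i = 1 then [false] else true :: (List.replicate (i - 2) false ++ [true])

/-- The root code `R_n = {s_1, …, s_n}`. -/
def rootCode (n : ℕ) : Finset (List Bool) :=
  (Finset.Icc 1 n).image rootWord

/-- `N(σ)`: palindromes `w` such that `σ` is the longest palindrome that is a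
proper prefix of `w`. -/
def Nbhd (σ : List Bool) : Set (List Bool) :=
  {w | Palin w ∧ Palin σ ∧ σ <+: w ∧ σ ≠ w ∧
    ∀ u, Palin u → u <+: w → u ≠ w → u.length ≤ σ.length}

/-- `N_n(σ) = {w ∈ N(σ) : |w| ≤ n}`. -/
def NbhdN (n : ℕ) (σ : List Bool) : Set (List Bool) :=
  {w | w ∈ Nbhd σ ∧ w.length ≤ n}

/-- `S_n`: symmetric fix-free codes with `n` codewords, not containing `1`,
all of whose codewords have length at most `n`. -/
def SCodes (n : ℕ) : Set (Finset (List Bool)) :=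
  {C | IsSFF C ∧ C.card = n ∧ [true] ∉ C ∧ ∀ w ∈ C, w.length ≤ n}

/-- The relation `S →^σ T`: `σ ∈ S` and `T ⊆ (S ∪ N_n(σ)) \ {σ}`. -/
def ArrowTo (n : ℕ) (σ : List Bool) (S T : Finset (List Bool)) : Prop :=
  σ ∈ S ∧ ∀ w ∈ T, (w ∈ S ∨ w ∈ NbhdN n σ) ∧ w ≠ σ

/-- The relation `S ⇒^σ T`: `σ ∈ S`, `T ⊆ (S ∪ N_n(σ)) \ {σ}`, `|T| = n`, and
every omitted element of `(S ∪ N_n(σ)) \ {σ}` is at least as long as every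
element of `T` (so `T` consists of `n` shortest words of `(S ∪ N_n(σ)) \ {σ}`). -/
def StepTo (n : ℕ) (σ : List Bool) (S T : Finset (List Bool)) : Prop :=
  ArrowTo n σ S T ∧ T.card = n ∧
  ∀ w : List Bool, (w ∈ S ∨ w ∈ NbhdN n σ) → w ≠ σ → w ∉ T →
    ∀ v ∈ T, v.length ≤ w.length

/-- A `⇒`-transformation `R_n = S⁰ ⇒ S¹ ⇒ ⋯ ⇒ Sᵐ = C` of codes in `S_n`. -/
def IsTransform (n m : ℕ) (S : ℕ → Finset (List Bool)) (C : Finset (List Bool)) : Prop :=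
  S 0 = rootCode n ∧ S m = C ∧ (∀ i ≤ m, S i ∈ SCodes n) ∧
  ∀ i < m, ∃ σ, StepTo n σ (S i) (S (i + 1))

/-- A `⇒`-transformation with the witness `π i` used for the step `S i ⇒ S (i+1)`
(so `π 0, …, π (m-1)` are `π_1, …, π_m`). -/
def IsTransformW (n m : ℕ) (S : ℕ → Finset (List Bool)) (π : ℕ → List Bool)
    (C : Finset (List Bool)) : Prop :=
  S 0 = rootCode n ∧ S m = C ∧ (∀ i ≤ m, S i ∈ SCodes n) ∧
  ∀ i < m, StepTo n (π i) (S i) (S (i + 1))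

/-- `C^prefix`: palindromes other than `1` that are proper prefixes of some codeword of `C`. -/
def prefixSet (C : Finset (List Bool)) : Set (List Bool) :=
  {u | Palin u ∧ u ≠ [true] ∧ ∃ w ∈ C, u <+: w ∧ u ≠ w}

/-- Maximum codeword length of a code. -/
def maxLen (C : Finset (List Bool)) : ℕ := C.sup List.length

/-- Bitwise complement of a binary string. -/
def bcomp (w : List Bool) : List Bool := w.map (fun b => !b)

/-- `Dominates n l l'`: the sorted nondecreasing sequence `l` dominates `l'`,
i.e. `Σ_{j=1}^i l'_j ≥ Σ_{j=1}^i l_j` for every `i ∈ {1,…,n}`. -/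
def Dominates (n : ℕ) (l l' : ℕ → ℕ) : Prop :=
  ∀ i ≤ n, ∑ j ∈ Finset.range i, l j ≤ ∑ j ∈ Finset.range i, l' j

/-- Membership in `D_n`: codes in `S_n` whose length sequence is not dominated by
the length sequence of any code in `S_n` having a different length sequence. -/
def InD (n : ℕ) (S : Finset (List Bool)) : Prop :=
  S ∈ SCodes n ∧ ∀ C ∈ SCodes n, lenSeq C ≠ lenSeq S →
    ¬ Dominates n (nthLen C) (nthLen S)

/-!
Any symmetric fix-free code with `n ≥ 3` codewords has a sorted length sequence that is
lexicographically at least `(1, 2, …, n)`. Indeed, if it begins with `1, 2, …, j`, then after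
complementing bits we may assume `0` is a codeword, and then the codewords of lengths `m ≤ j` are
forced to be `1 0^(m-2) 1`; so a second codeword of length `≤ j` is impossible and the next length is
at least `j + 1`. For the geometric weights `p_i ∝ (n + 1)^(-i)` each weight exceeds `n` times the
sum of all later ones, and as the lengths of `R_n` are at most `n`, being lexicographically smaller
makes its expected length smaller.
-/

open Finset

lemma rootWord_add_two (a : ℕ) :
    rootWord (a + 2) = true :: (List.replicate a false ++ [true]) := by
  simp [rootWord]

lemma length_rootWord {i : ℕ} (hi : 1 ≤ i) : (rootWord i).length = i := by
  unfold rootWord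
  split_ifs <;> simp <;> omega

lemma palin_rootWord (i : ℕ) : Palin (rootWord i) := by
  unfold rootWord Palin
  split_ifs <;> simp

lemma not_rootWord_prefix_of_lt {i j : ℕ} (hi : 1 ≤ i) (hij : i < j) :
    ¬ rootWord i <+: rootWord j := by
  obtain ⟨c, rfl⟩ : ∃ c, j = i + c + 1 := ⟨j - i - 1, by omega⟩
  obtain ⟨a, rfl⟩ | rfl : (∃ a, i = a + 2) ∨ i = 1 :=
    (Nat.lt_or_ge i 2).elim (fun _ => Or.inr (by omega)) (fun _ => Or.inl ⟨i - 2, by omega⟩)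
  · rw [show a + 2 + c + 1 = a + (c + 1) + 2 by omega, rootWord_add_two, rootWord_add_two,
      List.replicate_add, List.append_assoc]
    simp [List.prefix_append_right_inj, List.replicate_succ]
  · rw [show 1 + c + 1 = c + 2 by omega, rootWord_add_two]
    simp [rootWord]

lemma eq_of_rootWord_prefix {i j : ℕ} (hi : 1 ≤ i) (hj : 1 ≤ j)
    (h : rootWord i <+: rootWord j) : i = j := by
  have hle : i ≤ j := by simpa [length_rootWord hi, length_rootWord hj] using h.length_le
  by_contra hne
  exact not_rootWord_prefix_of_lt hi (lt_of_le_of_ne hle hne) h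

lemma rootWord_injOn (n : ℕ) : Set.InjOn rootWord (Icc 1 n) := fun _ hi _ hj h =>
  eq_of_rootWord_prefix (mem_Icc.1 hi).1 (mem_Icc.1 hj).1 (h ▸ List.prefix_refl _)

lemma card_rootCode (n : ℕ) : (rootCode n).card = n := by
  rw [rootCode, card_image_of_injOn (rootWord_injOn n), Nat.card_Icc, Nat.add_sub_cancel]

lemma isSFF_rootCode (n : ℕ) : IsSFF (rootCode n) := by
  simp only [IsSFF, rootCode, mem_image, mem_Icc, forall_exists_index, and_imp]
  refine ⟨?_, ?_⟩
  · rintro _ i - - rfl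
    exact palin_rootWord i
  · rintro _ _ hi - rfl _ _ hj - rfl h
    rw [eq_of_rootWord_prefix hi hj h]

lemma true_not_mem_rootCode (n : ℕ) : [true] ∉ rootCode n := by
  simp only [rootCode, mem_image, mem_Icc, not_exists, not_and]
  intro i ⟨hi, _⟩ h
  have := length_rootWord hi
  rw [h] at this
  subst this
  simp [rootWord] at h

lemma coe_lenSeq (C : Finset (List Bool)) :
    (lenSeq C : Multiset ℕ) = C.val.map List.length :=
  Multiset.sort_eq _ _

lemma length_lenSeq (C : Finset (List Bool)) : (lenSeq C).length = C.card := by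
  rw [lenSeq, Multiset.length_sort, Multiset.card_map, card_def]

lemma nthLen_eq_getElem (C : Finset (List Bool)) {i : ℕ} (hi : i < C.card) :
    nthLen C i = (lenSeq C)[i]'(by rwa [length_lenSeq]) :=
  List.getD_eq_getElem _ _ _

lemma exists_mem_length_eq_nthLen (C : Finset (List Bool)) {i : ℕ} (hi : i < C.card) :
    ∃ w ∈ C, w.length = nthLen C i := by
  have : nthLen C i ∈ C.val.map List.length := by
    rw [← coe_lenSeq, Multiset.mem_coe, nthLen_eq_getElem C hi]
    exact List.getElem_mem _
  exact Multiset.mem_map.1 this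

lemma pairwise_lenSeq (C : Finset (List Bool)) : (lenSeq C).Pairwise (· ≤ ·) :=
  Multiset.pairwise_sort _ _

lemma nthLen_mono (C : Finset (List Bool)) {i k : ℕ} (h : i ≤ k) (hk : k < C.card) :
    nthLen C i ≤ nthLen C k := by
  rw [nthLen_eq_getElem C (h.trans_lt hk), nthLen_eq_getElem C hk]
  simpa using (pairwise_lenSeq C).rel_get_of_le
    (a := ⟨i, by rw [length_lenSeq]; omega⟩) (b := ⟨k, by rwa [length_lenSeq]⟩) h

lemma lenSeq_rootCode (n : ℕ) : lenSeq (rootCode n) = List.range' 1 n := by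
  refine List.Perm.eq_of_pairwise' (pairwise_lenSeq _) List.pairwise_le_range' ?_
  rw [← Multiset.coe_eq_coe, coe_lenSeq, rootCode, image_val_of_injOn (rootWord_injOn n),
    Multiset.map_map, Nat.Icc_eq_range', Nat.add_sub_cancel, Multiset.map_coe,
    List.map_congr_left (f := List.length ∘ rootWord) (g := id)
      fun i hi => length_rootWord (List.mem_range'_1.1 hi).1,
    List.map_id]

lemma nthLen_rootCode {n i : ℕ} (hi : i < n) : nthLen (rootCode n) i = i + 1 := by
  rw [nthLen, lenSeq_rootCode, List.getD_eq_getElem _ _ (by simpa using hi),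
    List.getElem_range', one_mul, Nat.add_comm]

lemma exists_ne_of_nthLen_eq_nthLen_succ (C : Finset (List Bool)) {i : ℕ} (hi : i + 1 < C.card)
    (h : nthLen C i = nthLen C (i + 1)) :
    ∃ w₁ ∈ C, ∃ w₂ ∈ C, w₁ ≠ w₂ ∧ w₁.length = nthLen C i ∧ w₂.length = nthLen C i := by
  have hL := length_lenSeq C
  have hdrop : (lenSeq C).drop i = nthLen C i :: nthLen C i :: (lenSeq C).drop (i + 2) := by
    rw [List.drop_eq_getElem_cons (by omega), List.drop_eq_getElem_cons (by omega),
      ← nthLen_eq_getElem C (by omega), ← nthLen_eq_getElem C hi, h]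
  have hcount : 2 ≤ (lenSeq C).count (nthLen C i) := by
    have := ((lenSeq C).drop_sublist i).count_le (nthLen C i)
    simp only [hdrop, List.count_cons_self] at this
    omega
  rw [← Multiset.coe_count, coe_lenSeq, Multiset.count_map, ← filter_val, ← card_def] at hcount
  obtain ⟨w₁, hw₁, w₂, hw₂, hne⟩ := one_lt_card.1 hcount
  rw [mem_filter] at hw₁ hw₂
  exact ⟨w₁, hw₁.1, w₂, hw₂.1, hne, hw₁.2.symm, hw₂.2.symm⟩

lemma exists_replicate_false_append {t : List Bool} (h : true ∈ t) :
    ∃ a r, t = List.replicate a false ++ true :: r := by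
  induction t with
  | nil => simp at h
  | cons b t ih =>
    cases b
    · obtain ⟨a, r, rfl⟩ := ih (by simpa using h)
      exact ⟨a + 1, r, rfl⟩
    · exact ⟨0, t, rfl⟩

lemma true_mem_of_palin_true_cons {t : List Bool} (h : Palin (true :: t)) (ht : t ≠ []) :
    true ∈ t := by
  have hlast := congrArg List.head? h
  rw [List.head?_reverse, List.getLast?_cons, List.getLast?_eq_some_getLast ht] at hlast
  simp only [Option.getD_some, List.head?_cons, Option.some.injEq] at hlast
  exact hlast ▸ List.getLast_mem ht

lemma exists_rootWord_append_of_palin {t : List Bool} (h : Palin (true :: t)) (ht : t ≠ []) :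
    ∃ a r, true :: t = rootWord (a + 2) ++ r := by
  obtain ⟨a, r, rfl⟩ := exists_replicate_false_append (true_mem_of_palin_true_cons h ht)
  exact ⟨a, r, by simp [rootWord_add_two]⟩

lemma bcomp_involutive : Function.Involutive bcomp := fun w => by
  simp [bcomp, Function.comp_def]

lemma length_bcomp (w : List Bool) : (bcomp w).length = w.length := List.length_map _

namespace IsSFF

variable {C : Finset (List Bool)}

lemma nil_not_mem (hC : IsSFF C) (h2 : 2 ≤ C.card) : [] ∉ C := by
  intro hnil
  obtain ⟨v, hv, hne⟩ := exists_mem_ne h2 []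
  exact hne (hC.2 _ hnil _ hv List.nil_prefix).symm

lemma card_le_two (hC : IsSFF C) (h0 : [false] ∈ C) (h1 : [true] ∈ C) : C.card ≤ 2 := by
  have hsub : C ⊆ {[false], [true]} := by
    intro w hw
    match w with
    | [] => exact absurd (hC.2 _ hw _ h0 List.nil_prefix) (by simp)
    | false :: t => simp [← hC.2 _ h0 _ hw ⟨t, rfl⟩]
    | true :: t => simp [← hC.2 _ h1 _ hw ⟨t, rfl⟩]
  exact (card_le_card hsub).trans Finset.card_le_two

lemma image_bcomp (hC : IsSFF C) : IsSFF (C.image bcomp) := by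
  simp only [IsSFF, mem_image, forall_exists_index, and_imp]
  refine ⟨?_, ?_⟩
  · rintro _ w hw rfl
    rw [Palin, bcomp, ← List.map_reverse, hC.1 w hw]
  · rintro _ u hu rfl _ w hw rfl h
    rw [hC.2 u hu w hw (by simpa [bcomp, Function.comp_def] using h.map (fun b => !b))]

/- A codeword `1 t` factors as `1 0^a 1 r`; by induction `1 0^a 1` is itself the codeword of
length `a + 2`, so fix-freeness forces `r = []`. -/
lemma eq_rootWord (hC : IsSFF C) (h0 : [false] ∈ C) (h1 : [true] ∉ C) {k : ℕ}
    (hcov : ∀ m ∈ Icc 1 k, ∃ w ∈ C, w.length = m) :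
    ∀ w ∈ C, w.length ≤ k → w = rootWord w.length := by
  intro w
  induction' hm : w.length using Nat.strong_induction_on with m ih generalizing w
  intro hw hk
  match w with
  | [] => exact absurd (hC.2 _ hw _ h0 List.nil_prefix) (by simp)
  | false :: t => rw [← hm, ← hC.2 _ h0 _ hw ⟨t, rfl⟩]; rfl
  | true :: t =>
    have ht : t ≠ [] := by rintro rfl; exact h1 hw
    obtain ⟨a, r, hwr⟩ := exists_rootWord_append_of_palin (hC.1 _ hw) ht
    rw [hwr] at hw hm ⊢
    simp only [List.length_append, length_rootWord (by omega : 1 ≤ a + 2)] at hm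
    obtain rfl | hr := eq_or_ne r []
    · simp [← hm]
    obtain ⟨v, hv, hvl⟩ := hcov (a + 2) (mem_Icc.2 ⟨by omega, by omega⟩)
    have hlt : a + 2 < m := by have := List.length_pos_iff.2 hr; omega
    have hv' : v = rootWord (a + 2) := hvl ▸ ih _ hlt v hvl hv (by omega)
    have := congrArg List.length (hC.2 _ hv _ hw (hv' ▸ List.prefix_append _ _))
    simp only [List.length_append, length_rootWord (by omega : 1 ≤ a + 2)] at this
    exact absurd (List.length_eq_zero_iff.1 (by omega)) hr

/- Complementing all bits, we may assume `0 ∈ C`; then `1 ∉ C`, as `{0, 1}` admits no third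
codeword. -/
lemma eq_of_length_eq (hC : IsSFF C) (h3 : 3 ≤ C.card) {k : ℕ}
    (hcov : ∀ m ∈ Icc 1 k, ∃ w ∈ C, w.length = m) {w₁ w₂ : List Bool} (hw₁ : w₁ ∈ C)
    (hw₂ : w₂ ∈ C) (hlen : w₁.length = w₂.length) (hk : w₁.length ≤ k) : w₁ = w₂ := by
  wlog h0 : [false] ∈ C generalizing C w₁ w₂
  · obtain hnil | hpos := Nat.eq_zero_or_pos w₁.length
    · have hnil₂ : w₂.length = 0 := hlen ▸ hnil
      rw [List.length_eq_zero_iff.1 hnil, List.length_eq_zero_iff.1 hnil₂]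
    have h1 : [true] ∈ C := by
      obtain ⟨u, hu, hu1⟩ := hcov 1 (mem_Icc.2 ⟨le_rfl, by omega⟩)
      match u, hu1 with
      | [false], _ => exact absurd hu h0
      | [true], _ => exact hu
    refine bcomp_involutive.injective (this hC.image_bcomp ?_ ?_ (mem_image_of_mem _ hw₁)
      (mem_image_of_mem _ hw₂) (by simp [length_bcomp, hlen]) (by simpa [length_bcomp])
      (mem_image_of_mem _ h1))
    · rwa [card_image_of_injective _ bcomp_involutive.injective]
    · intro m hm
      obtain ⟨w, hw, rfl⟩ := hcov m hm
      exact ⟨bcomp w, mem_image_of_mem _ hw, length_bcomp w⟩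
  have h1 : [true] ∉ C := fun h1 => by have := hC.card_le_two h0 h1; omega
  rw [hC.eq_rootWord h0 h1 hcov w₁ hw₁ hk, hC.eq_rootWord h0 h1 hcov w₂ hw₂ (hlen ▸ hk), hlen]

lemma succ_le_nthLen (hC : IsSFF C) (h3 : 3 ≤ C.card) {j : ℕ} (hj : j < C.card)
    (hpre : ∀ i < j, nthLen C i = i + 1) : j + 1 ≤ nthLen C j := by
  by_contra! hlt
  obtain _ | j := j
  · obtain ⟨w, hw, hwl⟩ := exists_mem_length_eq_nthLen C hj
    exact hC.nil_not_mem (by omega) (List.length_eq_zero_iff.1 (by omega : w.length = 0) ▸ hw)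
  have hprev := hpre j (by omega)
  have hdup : nthLen C j = nthLen C (j + 1) := by
    have := nthLen_mono C (Nat.le_add_right j 1) hj
    omega
  obtain ⟨w₁, hw₁, w₂, hw₂, hne, hl₁, hl₂⟩ := exists_ne_of_nthLen_eq_nthLen_succ C hj hdup
  refine hne (hC.eq_of_length_eq h3 (k := j + 1) ?_ hw₁ hw₂ (hl₁.trans hl₂.symm) (by omega))
  intro m hm
  rw [mem_Icc] at hm
  obtain ⟨w, hw, hwl⟩ := exists_mem_length_eq_nthLen C (i := m - 1) (by omega)
  exact ⟨w, hw, by rw [hwl, hpre (m - 1) (by omega)]; omega⟩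

lemma rootCode_lex_le (hC : IsSFF C) {n : ℕ} (hn : 3 ≤ n) (hcard : C.card = n) :
    (∀ i < n, nthLen (rootCode n) i = nthLen C i) ∨
      ∃ j < n, (∀ i < j, nthLen (rootCode n) i = nthLen C i) ∧
        nthLen (rootCode n) j < nthLen C j := by
  by_cases h : ∀ i < n, nthLen (rootCode n) i = nthLen C i
  · exact Or.inl h
  push Not at h
  set j := Nat.find h
  obtain ⟨hj, hne⟩ : j < n ∧ nthLen (rootCode n) j ≠ nthLen C j := Nat.find_spec h
  have hpre : ∀ i < j, nthLen (rootCode n) i = nthLen C i := fun i hi =>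
    by_contra fun hne' => Nat.find_min h hi ⟨by omega, hne'⟩
  have hle : j + 1 ≤ nthLen C j := hC.succ_le_nthLen (by omega) (by omega) fun i hi => by
    rw [← hpre i hi, nthLen_rootCode (by omega)]
  rw [nthLen_rootCode hj] at hne
  exact Or.inr ⟨j, hj, hpre, by rw [nthLen_rootCode hj]; omega⟩

end IsSFF

lemma sum_mul_le_sum_mul_of_lex {n M : ℕ} {w : ℕ → ℝ} {a b : ℕ → ℕ} (hw : ∀ i < n, 0 ≤ w i)
    (hdom : ∀ j < n, (M : ℝ) * ∑ i ∈ Ico (j + 1) n, w i ≤ w j) (ha : ∀ i < n, a i ≤ M)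
    (hlex : (∀ i < n, a i = b i) ∨ ∃ j < n, (∀ i < j, a i = b i) ∧ a j < b j) :
    ∑ i ∈ range n, w i * a i ≤ ∑ i ∈ range n, w i * b i := by
  obtain heq | ⟨j, hj, heq, hlt⟩ := hlex
  · exact (sum_congr rfl fun i hi => by rw [heq i (mem_range.1 hi)]).le
  rw [← sub_nonneg, ← sum_sub_distrib, ← sum_range_add_sum_Ico _ hj.le,
    sum_eq_sum_Ico_succ_bot hj]
  have hhead : ∑ i ∈ range j, (w i * b i - w i * a i) = 0 :=
    sum_eq_zero fun i hi => by rw [heq i (mem_range.1 hi), sub_self]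
  have hj' : w j ≤ w j * b j - w j * a j := by
    have : (a j : ℝ) + 1 ≤ b j := by exact_mod_cast hlt
    nlinarith [hw j hj]
  have htail : -(M * ∑ i ∈ Ico (j + 1) n, w i) ≤
      ∑ i ∈ Ico (j + 1) n, (w i * b i - w i * a i) := by
    rw [mul_sum, ← sum_neg_distrib]
    refine sum_le_sum fun i hi => ?_
    have hin : i < n := (mem_Ico.1 hi).2
    have : (a i : ℝ) ≤ M := by exact_mod_cast ha i hin
    nlinarith [hw i hin, (b i).cast_nonneg (α := ℝ)]
  linarith [hdom j hj]

noncomputable def geomProb (q : ℝ) (n i : ℕ) : ℝ := q ^ i / ∑ k ∈ range n, q ^ k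

lemma isProbVec_geomProb {q : ℝ} (hq0 : 0 < q) (hq1 : q ≤ 1) {n : ℕ} (hn : 0 < n) :
    IsProbVec (geomProb q n) n := by
  have hS : 0 < ∑ k ∈ range n, q ^ k :=
    sum_pos (fun k _ => pow_pos hq0 k) (nonempty_range_iff.2 hn.ne')
  refine ⟨fun i j _ _ hij => ?_, fun i _ => div_pos (pow_pos hq0 i) hS, ?_⟩
  · exact div_le_div_of_nonneg_right (pow_le_pow_of_le_one hq0.le hq1 hij) hS.le
  · simp only [geomProb]
    rw [← sum_div, div_self hS.ne']

/- The ratio `q = 1 / (M + 1)` is chosen so that `M * q ^ (j + 1) / (1 - q) = q ^ j`. -/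
lemma mul_sum_Ico_geomProb_le {M : ℝ} (hM : 0 < M) (n j : ℕ) :
    M * ∑ i ∈ Ico (j + 1) n, geomProb (M + 1)⁻¹ n i ≤ geomProb (M + 1)⁻¹ n j := by
  set q := (M + 1)⁻¹
  have hq0 : 0 < q := by positivity
  have hq1 : q < 1 := inv_lt_one_of_one_lt₀ (by linarith)
  simp only [geomProb, ← sum_div, ← mul_div_assoc]
  refine div_le_div_of_nonneg_right ?_ (sum_nonneg fun k _ => (pow_pos hq0 k).le)
  calc M * ∑ i ∈ Ico (j + 1) n, q ^ i ≤ M * (q ^ (j + 1) / (1 - q)) :=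
        mul_le_mul_of_nonneg_left (geom_sum_Ico_le_of_lt_one hq0.le hq1) hM.le
    _ = q ^ j := by
        have hMq : 1 - q = M * q := by simp only [q]; field_simp; ring
        rw [hMq, pow_succ]
        field_simp

/-- For every `n ≥ 3`, the root code `R_n` is an optimal symmetric
fix-free code with `n` codewords, i.e. `R_n ∈ O_n`. -/
theorem root_code_optimal (n : ℕ) (hn : 3 ≤ n) : InOpt n (rootCode n) := by
  have hM : (0 : ℝ) < n := Nat.cast_pos.2 (by omega)
  have hp : IsProbVec (geomProb ((n : ℝ) + 1)⁻¹ n) n :=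
    isProbVec_geomProb (by positivity) (inv_le_one_of_one_le₀ (by linarith)) (by omega)
  refine ⟨⟨isSFF_rootCode n, card_rootCode n, _, hp, fun C hC hcard => ?_⟩,
    true_not_mem_rootCode n⟩
  exact sum_mul_le_sum_mul_of_lex (fun i hi => (hp.2.1 i hi).le)
    (fun j _ => mul_sum_Ico_geomProb_le hM n j) (fun i hi => (nthLen_rootCode hi).trans_le hi)
    (hC.rootCode_lex_le hn hcard)
end

section
/- There exists a constant c > 0 such that for every sufficiently large even n there is a code B_n ∈ S_n with the following property: every sequence R_n = S⁰ → S¹ → … → Sᵐ = B_n of codes in S_n in which, for each i ∈ {0, 1, …, m−1}, every codeword of B_n has a prefix in Sⁱ, satisfies m ≥ c · n^{3/2}. -/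
/-!
The hard code consists of the `n` words `w_k = (p_k 1)^l p_k`, `k < n`, where the `p_k` are
distinct palindromes `0 τ τᴿ 0` of length `2r + 2`, `r = ⌊√n⌋`, and `l = ⌊r/4⌋`. Along a chain
`S⁰ → ⋯ → Sᵐ` starting at the root code, which holds no long prefix of `w_k`, the longest prefix
of `w_k` in the current code has to pass each of the `l` thresholds `|(p_k 1)^(t+1) p_k|`.
A step `→^σ` can pass one only by adding some `v ∈ N(σ)`; as the palindrome
`(p_k 1)^(t+1) p_k` is a prefix of `v` longer than `σ`, it must be `v` itself, and `σ` extends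
`p_k`. So the pivot of the step determines `k`, and since the new code is prefix-free it also
determines `t`: the `n l` crossings happen at distinct steps, whence `m ≥ n l ≥ n^(3/2) / 8`.
-/

theorem Nat.exists_lt_not_and_succ {P : ℕ → Prop} (h0 : ¬P 0) {m : ℕ} (hm : P m) :
    ∃ j < m, ¬P j ∧ P (j + 1) := by
  induction m with
  | zero => exact absurd hm h0
  | succ m ih =>
    by_cases h : P m
    · obtain ⟨j, hj, hPj⟩ := ih h
      exact ⟨j, by omega, hPj⟩
    · exact ⟨m, by omega, h, hm⟩

theorem IsSFF.eq_of_prefix_of_prefix {C : Finset (List Bool)} (hC : IsSFF C)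
    {u v w : List Bool} (hu : u ∈ C) (hv : v ∈ C) (huw : u <+: w) (hvw : v <+: w) : u = v :=
  (List.prefix_or_prefix_of_prefix huw hvw).elim (hC.2 u hu v hv) fun h =>
    (hC.2 v hv u hu h).symm

theorem ArrowTo.prefix_pivot_and_mem_of_crossing {N : ℕ} {σ p q w v : List Bool}
    {S T : Finset (List Bool)} (hstep : ArrowTo N σ S T) (hp : Palin p) (hq : Palin q)
    (hpq : p <+: q) (hlt : p.length < q.length) (hqw : q <+: w)
    (hS : ∀ u ∈ S, u <+: w → u.length < q.length)
    (hv : v ∈ T) (hvw : v <+: w) (hqv : q.length ≤ v.length) : p <+: σ ∧ q ∈ T := by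
  obtain ⟨hσS, hT⟩ := hstep
  have hvS : v ∉ S := fun h => (hS v h hvw).not_ge hqv
  obtain ⟨⟨-, -, hσv, -, hmax⟩, -⟩ := (hT v hv).1.resolve_left hvS
  have hσq : σ.length < q.length := hS σ hσS (hσv.trans hvw)
  have hqv : q = v := by
    by_contra hne
    exact (hmax q hq (List.prefix_of_prefix_length_le hqw hvw hqv) hne).not_gt hσq
  subst hqv
  have hpσ : p.length ≤ σ.length := hmax p hp hpq (by rintro rfl; exact lt_irrefl _ hlt)
  exact ⟨List.prefix_of_prefix_length_le hpq hσv hpσ, hv⟩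

theorem mul_le_of_arrowTo_chain {N n l m : ℕ} {W : ℕ → ℕ → List Bool}
    {S : ℕ → Finset (List Bool)} {π : ℕ → List Bool}
    (hpal : ∀ k t, Palin (W k t))
    (hmono : ∀ k {t t'}, t ≤ t' → W k t <+: W k t')
    (hlen : ∀ k, StrictMono fun t => (W k t).length)
    (hbase_len : ∀ k k', (W k 0).length = (W k' 0).length)
    (hbase_inj : Set.InjOn (fun k => W k 0) (Set.Iio n))
    (hS0 : ∀ k < n, ∀ u ∈ S 0, u <+: W k l → u.length < (W k 1).length)
    (hSm : ∀ k < n, W k l ∈ S m)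
    (hfree : ∀ i ≤ m, IsSFF (S i))
    (hπ : ∀ i < m, ArrowTo N (π i) (S i) (S (i + 1))) :
    n * l ≤ m := by
  have hcross : ∀ k < n, ∀ t < l, ∃ j < m, W k 0 <+: π j ∧ W k (t + 1) ∈ S (j + 1) := by
    intro k hk t ht
    obtain ⟨j, hjm, hnot, v, hv, hvw, hqv⟩ := Nat.exists_lt_not_and_succ
      (P := fun i => ∃ u ∈ S i, u <+: W k l ∧ (W k (t + 1)).length ≤ u.length)
      (fun ⟨u, hu, huw, hqu⟩ =>
        (hS0 k hk u hu huw).not_ge (((hlen k).monotone (by omega)).trans hqu))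
      ⟨W k l, hSm k hk, List.prefix_refl _, (hlen k).monotone (by omega)⟩
    push Not at hnot
    exact ⟨j, hjm, (hπ j hjm).prefix_pivot_and_mem_of_crossing (hpal k 0) (hpal k (t + 1))
      (hmono k (Nat.zero_le _)) (hlen k (Nat.succ_pos t)) (hmono k ht) hnot hv hvw hqv⟩
  choose! f hfm hfπ hfS using hcross
  have hinj : Set.InjOn (fun kt : ℕ × ℕ => f kt.1 kt.2)
      (Finset.range n ×ˢ Finset.range l : Finset (ℕ × ℕ)) := by
    rintro ⟨k, t⟩ hkt ⟨k', t'⟩ hkt' (hj : f k t = f k' t')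
    simp only [Finset.mem_coe, Finset.mem_product, Finset.mem_range] at hkt hkt'
    obtain rfl : k = k' := hbase_inj hkt.1 hkt'.1 <|
      (List.prefix_of_prefix_length_le (hfπ k hkt.1 t hkt.2) (hj ▸ hfπ k' hkt'.1 t' hkt'.2)
        (hbase_len k k').le).eq_of_length (hbase_len k k')
    have hW : W k (t + 1) = W k (t' + 1) :=
      (hfree _ (hfm k hkt.1 t hkt.2)).eq_of_prefix_of_prefix (hfS k hkt.1 t hkt.2)
        (hj ▸ hfS k hkt'.1 t' hkt'.2) (hmono k hkt.2) (hmono k hkt'.2)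
    simpa using (hlen k).injective (congrArg List.length hW)
  have hmaps : Set.MapsTo (fun kt : ℕ × ℕ => f kt.1 kt.2)
      (Finset.range n ×ˢ Finset.range l : Finset (ℕ × ℕ)) (Finset.range m) := by
    intro kt hkt
    simp only [Finset.mem_coe, Finset.mem_product, Finset.mem_range] at hkt ⊢
    exact hfm _ hkt.1 _ hkt.2
  simpa using Finset.card_le_card_of_injOn _ hmaps hinj

/-- `chainWord p t = (p 1)^t p`. -/
def chainWord (p : List Bool) : ℕ → List Bool
  | 0 => p
  | t + 1 => p ++ true :: chainWord p t

theorem chainWord_succ' (p : List Bool) (t : ℕ) :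
    chainWord p (t + 1) = chainWord p t ++ true :: p := by
  induction t with
  | zero => rfl
  | succ t ih =>
    show p ++ true :: chainWord p (t + 1) = (p ++ true :: chainWord p t) ++ true :: p
    rw [ih]; simp

theorem length_chainWord (p : List Bool) (t : ℕ) :
    (chainWord p t).length = t * (p.length + 1) + p.length := by
  induction t with
  | zero => simp [chainWord]
  | succ t ih => simp only [chainWord, List.length_append, List.length_cons, ih]; ring

theorem palin_chainWord {p : List Bool} (hp : Palin p) (t : ℕ) : Palin (chainWord p t) := by
  induction t with
  | zero => exact hp
  | succ t ih =>
    rw [Palin, chainWord, List.reverse_append, List.reverse_cons, ih, hp]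
    rw [List.append_assoc, List.singleton_append, ← chainWord_succ', chainWord]

theorem chainWord_prefix_chainWord (p : List Bool) {t t' : ℕ} (h : t ≤ t') :
    chainWord p t <+: chainWord p t' := by
  induction t', h using Nat.le_induction with
  | base => exact List.prefix_refl _
  | succ t' _ ih => exact ih.trans (chainWord_succ' p t' ▸ List.prefix_append _ _)

theorem strictMono_length_chainWord (p : List Bool) :
    StrictMono fun t => (chainWord p t).length := by
  refine strictMono_nat_of_lt_succ fun t => ?_
  simp only [length_chainWord]
  nlinarith

theorem chainWord_cons (a : Bool) (q : List Bool) (t : ℕ) :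
    ∃ z, chainWord (a :: q) t = a :: z := by
  cases t <;> exact ⟨_, rfl⟩

theorem length_le_one_of_mem_rootCode {n : ℕ} {u w : List Bool} (hu : u ∈ rootCode n)
    (huw : u <+: false :: w) : u.length ≤ 1 := by
  obtain ⟨i, -, rfl⟩ := Finset.mem_image.mp hu
  unfold rootWord at huw ⊢
  split_ifs at huw ⊢
  · simp
  · obtain ⟨_, h⟩ := huw
    simp at h

def lowBits (r k : ℕ) : List Bool := (List.range r).map k.testBit

theorem lowBits_injOn (r : ℕ) : Set.InjOn (lowBits r) (Set.Iio (2 ^ r)) := by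
  intro k hk k' hk' h
  refine Nat.eq_of_testBit_eq fun i => ?_
  rcases Nat.lt_or_ge i r with hi | hi
  · simpa [lowBits, hi] using congrArg (·[i]?) h
  · rw [Nat.testBit_lt_two_pow (hk.trans_le (Nat.pow_le_pow_right two_pos hi)),
      Nat.testBit_lt_two_pow (hk'.trans_le (Nat.pow_le_pow_right two_pos hi))]

def seed (r k : ℕ) : List Bool := false :: (lowBits r k ++ (lowBits r k).reverse ++ [false])

theorem length_seed (r k : ℕ) : (seed r k).length = 2 * r + 2 := by
  simp [seed, lowBits]; ring

theorem palin_seed (r k : ℕ) : Palin (seed r k) := by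
  simp [Palin, seed]

theorem seed_injOn (r : ℕ) : Set.InjOn (seed r) (Set.Iio (2 ^ r)) := by
  intro k hk k' hk' h
  refine lowBits_injOn r hk hk' ?_
  have h' := congrArg (List.take r) (List.cons.inj h).2
  simp only [List.append_assoc] at h'
  rwa [List.take_left' (by simp [lowBits]), List.take_left' (by simp [lowBits])] at h'

theorem image_mem_SCodes {n L : ℕ} {c : ℕ → List Bool} (hpal : ∀ k, Palin (c k))
    (hlen : ∀ k, (c k).length = L) (hL : 2 ≤ L) (hLn : L ≤ n)
    (hinj : Set.InjOn c (Set.Iio n)) :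
    (Finset.range n).image c ∈ SCodes n := by
  refine ⟨⟨?_, ?_⟩, ?_, ?_, ?_⟩
  · simpa using fun k _ => hpal k
  · simp only [Finset.mem_image]
    rintro _ ⟨k, -, rfl⟩ _ ⟨k', -, rfl⟩ h
    exact h.eq_of_length (by rw [hlen, hlen])
  · rw [Finset.card_image_of_injOn (by rwa [Finset.coe_range]), Finset.card_range]
  · simp only [Finset.mem_image, not_exists, not_and]
    intro k _ h
    have := hlen k
    rw [h, List.length_singleton] at this
    omega
  · simpa [hlen] using fun _ _ => hLn

theorem sq_succ_le_two_pow {r : ℕ} (hr : 6 ≤ r) : (r + 1) ^ 2 ≤ 2 ^ r := by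
  induction r, hr using Nat.le_induction with
  | base => norm_num
  | succ r _ ih => rw [pow_succ 2 r]; nlinarith [ih]

def hardCode (n : ℕ) : Finset (List Bool) :=
  (Finset.range n).image fun k => chainWord (seed (Nat.sqrt n) k) (Nat.sqrt n / 4)

theorem lt_two_pow_sqrt {n : ℕ} (hn : 49 ≤ n) : n < 2 ^ Nat.sqrt n :=
  (Nat.lt_succ_sqrt' n).trans_le (sq_succ_le_two_pow (Nat.le_sqrt'.mpr (by omega)))

theorem sqrt_div_four_mul_add_le {n : ℕ} (hn : 49 ≤ n) :
    (Nat.sqrt n / 4) * (2 * Nat.sqrt n + 2 + 1) + (2 * Nat.sqrt n + 2) ≤ n := by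
  have hr : 7 ≤ Nat.sqrt n := Nat.le_sqrt'.mpr (by omega)
  have hrn := Nat.sqrt_le' n
  have hl : 4 * (Nat.sqrt n / 4) ≤ Nat.sqrt n := Nat.mul_div_le _ _
  nlinarith

theorem chainWord_seed_injOn (r l : ℕ) :
    Set.InjOn (fun k => chainWord (seed r k) l) (Set.Iio (2 ^ r)) := by
  intro k hk k' hk' (h : chainWord (seed r k) l = chainWord (seed r k') l)
  refine seed_injOn r hk hk' ?_
  have hpre : seed r k <+: chainWord (seed r k) l := chainWord_prefix_chainWord _ l.zero_le
  have hpre' : seed r k' <+: chainWord (seed r k') l := chainWord_prefix_chainWord _ l.zero_le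
  rw [h] at hpre
  exact (List.prefix_of_prefix_length_le hpre hpre' (by simp [length_seed])).eq_of_length
    (by simp [length_seed])

theorem hardCode_mem_SCodes {n : ℕ} (hn : 49 ≤ n) : hardCode n ∈ SCodes n := by
  refine image_mem_SCodes (fun k => palin_chainWord (palin_seed _ k) _)
    (fun k => by rw [length_chainWord, length_seed]) (by omega) (sqrt_div_four_mul_add_le hn)
    ((chainWord_seed_injOn _ _).mono (Set.Iio_subset_Iio (lt_two_pow_sqrt hn).le))

theorem one_eighth_mul_rpow_three_halves_le {n : ℕ} (hn : 49 ≤ n) :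
    1 / 8 * (n : ℝ) ^ ((3 : ℝ) / 2) ≤ (n * (Nat.sqrt n / 4) : ℕ) := by
  have hr : Nat.sqrt n + 1 ≤ 8 * (Nat.sqrt n / 4) := by
    have : 7 ≤ Nat.sqrt n := Nat.le_sqrt'.mpr (by omega)
    omega
  have hsqrt : √(n : ℝ) ≤ 8 * (Nat.sqrt n / 4 : ℕ) :=
    Real.real_sqrt_le_nat_sqrt_succ.trans (by exact_mod_cast hr)
  have hpow : (n : ℝ) ^ ((3 : ℝ) / 2) = n * √(n : ℝ) := by
    rw [Real.sqrt_eq_rpow, show (3 : ℝ) / 2 = 1 + 1 / 2 by norm_num,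
      Real.rpow_add' (Nat.cast_nonneg n) (by norm_num), Real.rpow_one]
  rw [hpow]
  push_cast
  nlinarith [Nat.cast_nonneg (α := ℝ) n]

theorem length_lt_of_mem_rootCode_of_prefix {n r k l : ℕ} {u : List Bool} (hu : u ∈ rootCode n)
    (huw : u <+: chainWord (seed r k) l) : u.length < (chainWord (seed r k) 1).length := by
  obtain ⟨z, hz⟩ : ∃ z, chainWord (seed r k) l = false :: z := chainWord_cons _ _ l
  have := length_le_one_of_mem_rootCode hu (hz ▸ huw)
  simp only [length_chainWord, length_seed]
  omega

/-- There is a constant `c > 0` such that for every sufficiently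
large even `n` there is a code `B_n ∈ S_n` such that every sequence
`R_n = S⁰ → S¹ → ⋯ → Sᵐ = B_n` of codes in `S_n`, in which at every
intermediate stage every codeword of `B_n` has a prefix in `Sⁱ`, satisfies
`m ≥ c · n^{3/2}`. -/
theorem arrow_transform_lower_bound :
    ∃ c : ℝ, 0 < c ∧ ∃ N : ℕ, ∀ n : ℕ, N ≤ n → Even n →
      ∃ B ∈ SCodes n, ∀ (m : ℕ) (S : ℕ → Finset (List Bool)),
        (S 0 = rootCode n ∧ S m = B ∧ (∀ i ≤ m, S i ∈ SCodes n) ∧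
          (∀ i < m, ∃ σ, ArrowTo n σ (S i) (S (i + 1))) ∧
          (∀ i < m, ∀ w ∈ B, ∃ u ∈ S i, u <+: w)) →
        c * (n : ℝ) ^ ((3 : ℝ) / 2) ≤ (m : ℝ) := by
  refine ⟨1 / 8, by norm_num, 49, fun n hn _ => ⟨hardCode n, hardCode_mem_SCodes hn, ?_⟩⟩
  rintro m S ⟨hS0, hSm, hSC, harrow, -⟩
  choose! π hπ using harrow
  refine (one_eighth_mul_rpow_three_halves_le hn).trans (Nat.cast_le.mpr ?_)
  exact mul_le_of_arrowTo_chain (W := fun k => chainWord (seed (Nat.sqrt n) k))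
    (fun k => palin_chainWord (palin_seed _ k)) (fun k _ _ => chainWord_prefix_chainWord _)
    (fun k => strictMono_length_chainWord _) (fun k k' => by simp [chainWord, length_seed])
    ((seed_injOn _).mono (Set.Iio_subset_Iio (lt_two_pow_sqrt hn).le))
    (fun k _ u hu => length_lt_of_mem_rootCode_of_prefix (hS0 ▸ hu))
    (fun k hk => hSm ▸ Finset.mem_image_of_mem _ (Finset.mem_range.mpr hk))
    (fun i hi => (hSC i hi).1) hπ
end

section
/- Let S, I, S' ∈ S_n and let ω_1, ω_2 be distinct elements of S with ω_2 ∈ I such that neither of ω_1, ω_2 is a prefix of the other, S ⇒^{ω_1} I, and I ⇒^{ω_2} S'. Assume furthermore that N_n(ω_1) ∩ S' ≠ ∅, that min_{σ ∈ N_n(ω_1)} |σ| < max_{σ ∈ S} |σ|, and that min_{σ ∈ N_n(ω_2)} |σ| < max_{σ ∈ I} |σ|. Then there exists a code J ∈ S_n such that S ⇒^{ω_2} J and J ⇒^{ω_1} S'. -/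
-- auxiliary lemmas to be inserted above the theorem
section Aux

lemma nbhdN_prefix {n : ℕ} {σ w : List Bool} (h : w ∈ NbhdN n σ) : σ <+: w := h.1.2.2.1
lemma nbhdN_ne {n : ℕ} {σ w : List Bool} (h : w ∈ NbhdN n σ) : σ ≠ w := h.1.2.2.2.1
lemma nbhdN_palin {n : ℕ} {σ w : List Bool} (h : w ∈ NbhdN n σ) : Palin w := h.1.1
lemma nbhdN_len {n : ℕ} {σ w : List Bool} (h : w ∈ NbhdN n σ) : w.length ≤ n := h.2
lemma nbhdN_max {n : ℕ} {σ w : List Bool} (h : w ∈ NbhdN n σ) :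
    ∀ u, Palin u → u <+: w → u ≠ w → u.length ≤ σ.length := h.1.2.2.2.2

lemma nbhdN_len_lt {n : ℕ} {σ w : List Bool} (h : w ∈ NbhdN n σ) :
    σ.length < w.length := by
  have hp := nbhdN_prefix h
  have := hp.length_le
  rcases lt_or_eq_of_le this with h' | h'
  · exact h'
  · exact absurd (hp.eq_of_length h') (nbhdN_ne h)

/-- elements of `NbhdN n σ` form an antichain under prefix. -/
lemma nbhdN_antichain {n : ℕ} {σ u w : List Bool} (hu : u ∈ NbhdN n σ)
    (hw : w ∈ NbhdN n σ) (hp : u <+: w) : u = w := by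
  by_contra hne
  have h1 := nbhdN_max hw u (nbhdN_palin hu) hp hne
  have h2 := nbhdN_len_lt hu
  omega

/-- take `k` shortest elements of a finset of lists -/
lemma exists_min_selection (F : Finset (List Bool)) (k : ℕ) (hk : k ≤ F.card) :
    ∃ W, W ⊆ F ∧ W.card = k ∧ ∀ x ∈ F, x ∉ W → ∀ v ∈ W, v.length ≤ x.length := by
  induction k with
  | zero => exact ⟨∅, by simp⟩
  | succ k ih =>
    obtain ⟨W, hWF, hWcard, hWmin⟩ := ih (Nat.le_of_succ_le hk)
    have hne : (F \ W).Nonempty := by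
      rw [← Finset.card_pos, Finset.card_sdiff_of_subset hWF]
      omega
    obtain ⟨m, hm, hmmin⟩ := Finset.exists_min_image (F \ W) List.length hne
    have hmF : m ∈ F := (Finset.mem_sdiff.1 hm).1
    have hmW : m ∉ W := (Finset.mem_sdiff.1 hm).2
    refine ⟨insert m W, ?_, ?_, ?_⟩
    · exact Finset.insert_subset hmF hWF
    · rw [Finset.card_insert_of_notMem hmW, hWcard]
    · intro x hx hxW v hv
      have hxW' : x ∉ W := fun h => hxW (Finset.mem_insert_of_mem h)
      rcases Finset.mem_insert.1 hv with rfl | hv'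
      · exact hmmin x (Finset.mem_sdiff.2 ⟨hx, hxW'⟩)
      · exact hWmin x hx hxW' v hv'

end Aux
/-- If `S ⇒^{ω_1} I ⇒^{ω_2} S'` with `ω_1, ω_2` distinct elements
of `S`, neither a prefix of the other, `ω_2 ∈ I`, `N_n(ω_1) ∩ S' ≠ ∅`,
`min_{σ∈N_n(ω_1)} |σ| < max_{σ∈S} |σ|` and `min_{σ∈N_n(ω_2)} |σ| < max_{σ∈I} |σ|`,
then there is `J ∈ S_n` with `S ⇒^{ω_2} J ⇒^{ω_1} S'`. -/
theorem swap_steps (n : ℕ) (S I S' : Finset (List Bool))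
    (hS : S ∈ SCodes n) (hI : I ∈ SCodes n) (hS' : S' ∈ SCodes n)
    (ω₁ ω₂ : List Bool) (h1 : ω₁ ∈ S) (h2 : ω₂ ∈ S) (hne : ω₁ ≠ ω₂) (h2I : ω₂ ∈ I)
    (hnp1 : ¬ ω₁ <+: ω₂) (hnp2 : ¬ ω₂ <+: ω₁)
    (hstep1 : StepTo n ω₁ S I) (hstep2 : StepTo n ω₂ I S')
    (hinter : ∃ w ∈ S', w ∈ NbhdN n ω₁)
    (hmin1 : ∃ u ∈ NbhdN n ω₁, ∃ v ∈ S, u.length < v.length)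
    (hmin2 : ∃ u ∈ NbhdN n ω₂, ∃ v ∈ I, u.length < v.length) :
    ∃ J ∈ SCodes n, StepTo n ω₂ S J ∧ StepTo n ω₁ J S' := by
  classical
  obtain ⟨hSsff, hScard, hS1, hSlen⟩ := hS
  obtain ⟨hIsff, hIcard, hI1, hIlen⟩ := hI
  obtain ⟨hS'sff, hS'card, hS'1, hS'len⟩ := hS'
  obtain ⟨⟨-, harr1⟩, -, hminI⟩ := hstep1
  obtain ⟨⟨-, harr2⟩, -, hminS'⟩ := hstep2
  -- basic exclusions
  have hω₁A₂ : ω₁ ∉ NbhdN n ω₂ := fun h => hnp2 (nbhdN_prefix h)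
  have hω₂A₁ : ω₂ ∉ NbhdN n ω₁ := fun h => hnp1 (nbhdN_prefix h)
  have hA1A2 : ∀ w, w ∈ NbhdN n ω₁ → w ∉ NbhdN n ω₂ := by
    intro w hw1 hw2
    rcases List.prefix_or_prefix_of_prefix (nbhdN_prefix hw1) (nbhdN_prefix hw2) with h | h
    · exact hnp1 h
    · exact hnp2 h
  have hSA2 : ∀ w ∈ S, w ∉ NbhdN n ω₂ := fun w hw h =>
    nbhdN_ne h (hSsff.2 ω₂ h2 w hw (nbhdN_prefix h))
  have hSA1 : ∀ w ∈ S, w ∉ NbhdN n ω₁ := fun w hw h =>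
    nbhdN_ne h (hSsff.2 ω₁ h1 w hw (nbhdN_prefix h))
  have hIA2 : ∀ w ∈ I, w ∉ NbhdN n ω₂ := fun w hw h =>
    nbhdN_ne h (hIsff.2 ω₂ h2I w hw (nbhdN_prefix h))
  have hω₁I : ω₁ ∉ I := fun h => (harr1 ω₁ h).2 rfl
  have hω₂S' : ω₂ ∉ S' := fun h => (harr2 ω₂ h).2 rfl
  have hω₁S' : ω₁ ∉ S' := by
    intro h
    rcases (harr2 ω₁ h).1 with h' | h'
    · exact hω₁I h'
    · exact hω₁A₂ h'
  -- Claim A: elements of S' ∩ N_n(ω₂) are at most as long as any element of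
  -- (S ∪ N_n(ω₁)) \ ({ω₁} ∪ I)
  have claimA : ∀ z ∈ S', z ∈ NbhdN n ω₂ → ∀ w₀, (w₀ ∈ S ∨ w₀ ∈ NbhdN n ω₁) →
      w₀ ≠ ω₁ → w₀ ∉ I → z.length ≤ w₀.length := by
    intro z hzS' hzA2 w₀ hw₀ hw₀ne hw₀I
    by_contra hcon
    push_neg at hcon
    have hIle : ∀ v ∈ I, v.length ≤ w₀.length := hminI w₀ hw₀ hw₀ne hw₀I
    have hIsub : I.erase ω₂ ⊆ S' := by
      intro x hx
      obtain ⟨hxne, hxI⟩ := Finset.mem_erase.1 hx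
      by_contra hxS'
      have h1' := hminS' x (Or.inl hxI) hxne hxS' z hzS'
      have h2' := hIle x hxI
      omega
    obtain ⟨u, hu, v, hv, huv⟩ := hmin2
    have huS' : u ∈ S' := by
      by_contra huS'
      have h1' := hminS' u (Or.inr hu) (Ne.symm (nbhdN_ne hu)) huS' z hzS'
      have h2' := hIle v hv
      omega
    have huI : u ∉ I := fun h => hIA2 u h hu
    have hzI : z ∉ I := fun h => hIA2 z h hzA2
    have hune : u ≠ z := by
      intro heq
      have := hIle v hv
      rw [heq] at huv
      omega
    have hsub : insert u (insert z (I.erase ω₂)) ⊆ S' := by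
      intro x hx
      rcases Finset.mem_insert.1 hx with rfl | hx
      · exact huS'
      rcases Finset.mem_insert.1 hx with rfl | hx
      · exact hzS'
      · exact hIsub hx
    have hc1 : z ∉ I.erase ω₂ := fun h => hzI (Finset.mem_of_mem_erase h)
    have hc2 : u ∉ insert z (I.erase ω₂) := by
      intro h
      rcases Finset.mem_insert.1 h with heq | h
      · exact hune heq
      · exact huI (Finset.mem_of_mem_erase h)
    have hnpos : 0 < n := hIcard ▸ Finset.card_pos.2 ⟨ω₂, h2I⟩
    have hcard := Finset.card_le_card hsub
    rw [Finset.card_insert_of_notMem hc2, Finset.card_insert_of_notMem hc1,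
        Finset.card_erase_of_mem h2I, hIcard, hS'card] at hcard
    omega
  -- Claim B
  have claimB : ∀ u', (u' ∈ S ∨ u' ∈ NbhdN n ω₂) → u' ≠ ω₂ → u' ∉ S' → u' ≠ ω₁ →
      ∀ v ∈ S', v.length ≤ u'.length := by
    intro u' hu' hne2 hnS' hne1 v hv
    rcases hu' with huS | huA2
    · by_cases huI : u' ∈ I
      · exact hminS' u' (Or.inl huI) hne2 hnS' v hv
      · rcases (harr2 v hv).1 with hvI | hvA2
        · exact hminI u' (Or.inl huS) hne1 huI v hvI
        · exact claimA v hv hvA2 u' (Or.inl huS) hne1 huI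
    · exact hminS' u' (Or.inr huA2) hne2 hnS' v hv
  -- Claim C
  have claimC : ∀ w ∈ NbhdN n ω₁, w ∉ S' → ∀ v ∈ S', v.length ≤ w.length := by
    intro w hwA1 hwS' v hv
    by_cases hwI : w ∈ I
    · refine hminS' w (Or.inl hwI) ?_ hwS' v hv
      intro heq
      exact hω₂A₁ (heq ▸ hwA1)
    · have hwne1 : w ≠ ω₁ := fun heq => (nbhdN_ne hwA1) heq.symm
      rcases (harr2 v hv).1 with hvI | hvA2
      · exact hminI w (Or.inr hwA1) hwne1 hwI v hvI
      · exact claimA v hv hvA2 w (Or.inr hwA1) hwne1 hwI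
  -- Finsets
  have hfin2 : (NbhdN n ω₂).Finite :=
    Set.Finite.subset (List.finite_length_le Bool n) (fun w hw => hw.2)
  have hfin1 : (NbhdN n ω₁).Finite :=
    Set.Finite.subset (List.finite_length_le Bool n) (fun w hw => hw.2)
  set A2 : Finset (List Bool) := hfin2.toFinset with hA2def
  set A1 : Finset (List Bool) := hfin1.toFinset with hA1def
  have hA2mem : ∀ w, w ∈ A2 ↔ w ∈ NbhdN n ω₂ := fun w => hfin2.mem_toFinset
  have hA1mem : ∀ w, w ∈ A1 ↔ w ∈ NbhdN n ω₁ := fun w => hfin1.mem_toFinset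
  set U₂ : Finset (List Bool) := (S ∪ A2).erase ω₂ with hU₂def
  set P : Finset (List Bool) := insert ω₁ (S' \ A1) with hPdef
  have hPsub : P ⊆ U₂ := by
    intro w hw
    rcases Finset.mem_insert.1 hw with rfl | hw
    · exact Finset.mem_erase.2 ⟨hne, Finset.mem_union_left _ h1⟩
    · obtain ⟨hwS', hwA1⟩ := Finset.mem_sdiff.1 hw
      refine Finset.mem_erase.2 ⟨(harr2 w hwS').2, ?_⟩
      rcases (harr2 w hwS').1 with hwI | hwA2
      · rcases (harr1 w hwI).1 with hwS | hwA1'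
        · exact Finset.mem_union_left _ hwS
        · exact absurd ((hA1mem w).2 hwA1') hwA1
      · exact Finset.mem_union_right _ ((hA2mem w).2 hwA2)
  obtain ⟨y, hyS', hyA1⟩ := hinter
  have hPcard : P.card ≤ n := by
    have h1' : S' \ A1 ⊆ S'.erase y := by
      intro w hw
      obtain ⟨hwS', hwA1⟩ := Finset.mem_sdiff.1 hw
      exact Finset.mem_erase.2 ⟨fun heq => hwA1 (heq ▸ (hA1mem y).2 hyA1), hwS'⟩
    have h2' := Finset.card_le_card h1'
    rw [Finset.card_erase_of_mem hyS', hS'card] at h2'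
    have h3' : ω₁ ∉ S' \ A1 := fun h => hω₁S' (Finset.mem_sdiff.1 h).1
    rw [hPdef, Finset.card_insert_of_notMem h3']
    have hnpos : 0 < n := hS'card ▸ Finset.card_pos.2 ⟨y, hyS'⟩
    omega
  have hU₂card : n ≤ U₂.card := by
    obtain ⟨u, hu, v0, hv0, huv0⟩ := hmin2
    have huS : u ∉ S := fun h => hSA2 u h hu
    have hsub : insert u (S.erase ω₂) ⊆ U₂ := by
      intro x hx
      rcases Finset.mem_insert.1 hx with rfl | hx
      · exact Finset.mem_erase.2 ⟨Ne.symm (nbhdN_ne hu),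
          Finset.mem_union_right _ ((hA2mem x).2 hu)⟩
      · obtain ⟨hxne, hxS⟩ := Finset.mem_erase.1 hx
        exact Finset.mem_erase.2 ⟨hxne, Finset.mem_union_left _ hxS⟩
    have hc := Finset.card_le_card hsub
    have hu' : u ∉ S.erase ω₂ := fun h => huS (Finset.mem_of_mem_erase h)
    rw [Finset.card_insert_of_notMem hu', Finset.card_erase_of_mem h2, hScard] at hc
    have hnpos : 0 < n := hScard ▸ Finset.card_pos.2 ⟨ω₂, h2⟩
    omega
  -- select the filler W
  obtain ⟨W, hWsub, hWcard, hWmin⟩ := exists_min_selection (U₂ \ P) (n - P.card) (by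
    rw [Finset.card_sdiff_of_subset hPsub]
    omega)
  set J : Finset (List Bool) := P ∪ W with hJdef
  have hWP : ∀ w ∈ W, w ∉ P := fun w hw => (Finset.mem_sdiff.1 (hWsub hw)).2
  have hWU₂ : W ⊆ U₂ := fun w hw => (Finset.mem_sdiff.1 (hWsub hw)).1
  have hJU₂ : J ⊆ U₂ := Finset.union_subset hPsub hWU₂
  have hJcard : J.card = n := by
    rw [hJdef, Finset.card_union_of_disjoint
      (Finset.disjoint_left.2 fun a ha hb => hWP a hb ha), hWcard]
    omega
  have hJmem : ∀ w ∈ J, (w ∈ S ∨ w ∈ NbhdN n ω₂) ∧ w ≠ ω₂ := by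
    intro w hw
    obtain ⟨hne', hmem⟩ := Finset.mem_erase.1 (hJU₂ hw)
    refine ⟨?_, hne'⟩
    rcases Finset.mem_union.1 hmem with h | h
    · exact Or.inl h
    · exact Or.inr ((hA2mem w).1 h)
  -- J ∈ SCodes n
  have hJpalin : ∀ w ∈ J, Palin w := by
    intro w hw
    rcases (hJmem w hw).1 with h | h
    · exact hSsff.1 w h
    · exact nbhdN_palin h
  have hJlen : ∀ w ∈ J, w.length ≤ n := by
    intro w hw
    rcases (hJmem w hw).1 with h | h
    · exact hSlen w h
    · exact nbhdN_len h
  have hJ1 : [true] ∉ J := by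
    intro h
    rcases (hJmem [true] h).1 with h' | h'
    · exact hS1 h'
    · have hlt := nbhdN_len_lt h'
      simp only [List.length_cons, List.length_nil] at hlt
      have hnil : ω₂ = [] := List.length_eq_zero_iff.1 (by omega)
      subst hnil
      exact hnp2 (List.nil_prefix)
  have hJpf : ∀ u ∈ J, ∀ w ∈ J, u <+: w → u = w := by
    intro u hu w hw hp
    obtain ⟨huside, hune2⟩ := hJmem u hu
    obtain ⟨hwside, hwne2⟩ := hJmem w hw
    rcases huside with huS | huA2
    · rcases hwside with hwS | hwA2
      · exact hSsff.2 u huS w hwS hp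
      · rcases List.prefix_or_prefix_of_prefix hp (nbhdN_prefix hwA2) with h | h
        · exact absurd (hSsff.2 u huS ω₂ h2 h) hune2
        · exact absurd (hSsff.2 ω₂ h2 u huS h).symm hune2
    · rcases hwside with hwS | hwA2
      · exact absurd (hSsff.2 ω₂ h2 w hwS ((nbhdN_prefix huA2).trans hp)).symm hwne2
      · exact nbhdN_antichain huA2 hwA2 hp
  have hJS : J ∈ SCodes n := ⟨⟨hJpalin, hJpf⟩, hJcard, hJ1, hJlen⟩
  refine ⟨J, hJS, ⟨⟨h2, hJmem⟩, hJcard, ?_⟩, ?_⟩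
  · -- minimality for S ⇒^{ω₂} J
    intro w hwside hwne2 hwJ v hv
    have hwU₂ : w ∈ U₂ := by
      refine Finset.mem_erase.2 ⟨hwne2, ?_⟩
      rcases hwside with h | h
      · exact Finset.mem_union_left _ h
      · exact Finset.mem_union_right _ ((hA2mem w).2 h)
    have hwP : w ∉ P := fun h => hwJ (Finset.mem_union_left _ h)
    have hwW : w ∉ W := fun h => hwJ (Finset.mem_union_right _ h)
    have hwne1 : w ≠ ω₁ := fun heq => hwP (heq ▸ Finset.mem_insert_self _ _)
    have hwS' : w ∉ S' := by
      intro h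
      have hwA1 : w ∉ A1 := by
        intro hA
        have hA' := (hA1mem w).1 hA
        rcases hwside with h' | h'
        · exact hSA1 w h' hA'
        · exact hA1A2 w hA' h'
      exact hwP (Finset.mem_insert_of_mem (Finset.mem_sdiff.2 ⟨h, hwA1⟩))
    have hBw := claimB w hwside hwne2 hwS' hwne1
    rcases Finset.mem_union.1 hv with hvP | hvW
    · rcases Finset.mem_insert.1 hvP with rfl | hv'
      · have h1' := hBw y hyS'
        have h2' := nbhdN_len_lt hyA1
        omega
      · exact hBw v (Finset.mem_sdiff.1 hv').1
    · exact hWmin w (Finset.mem_sdiff.2 ⟨hwU₂, hwP⟩) hwW v hvW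
  · -- StepTo n ω₁ J S'
    refine ⟨⟨Finset.mem_union_left _ (Finset.mem_insert_self _ _), ?_⟩, hS'card, ?_⟩
    · intro w hw
      refine ⟨?_, fun heq => hω₁S' (heq ▸ hw)⟩
      by_cases hwA1 : w ∈ NbhdN n ω₁
      · exact Or.inr hwA1
      · exact Or.inl (Finset.mem_union_left _ (Finset.mem_insert_of_mem
          (Finset.mem_sdiff.2 ⟨hw, fun h => hwA1 ((hA1mem w).1 h)⟩)))
    · intro w hwside hwne1 hwS' v hv
      rcases hwside with hwJ | hwA1
      · obtain ⟨hwside2, hwne2⟩ := hJmem w hwJ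
        exact claimB w hwside2 hwne2 hwS' hwne1 v hv
      · exact claimC w hwA1 hwS' v hv
end
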